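/- arXiv:2505.07240 — 2 statements merged into one kernel-verified Lean document; each statement's English description precedes it below -/
import Mathlib

section
/- Let k1, k2, k3 > 0 and K = diag(k1,k2,k3), and set h1 = min{k1+k2, k1+k3, k2+k3}. Let x ∈ ℝ³ with x ≠ 0, θ = ‖x‖, u = x/θ, and G = I₃ + sin(θ)·û + (1 − cos(θ))·û². Then (1/2)·tr(K(I₃ − G)) ≥ (h1/2)·(1 − cos θ). -/
open Matrix

noncomputable section

/-- Euclidean norm on ℝ³. -/
def euclNorm (x : Fin 3 → ℝ) : ℝ := Real.sqrt (∑ i, x i ^ 2)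

/-- The hat map: sends `x ∈ ℝ³` to the skew-symmetric matrix `x̂`. -/
def hat (x : Fin 3 → ℝ) : Matrix (Fin 3) (Fin 3) ℝ :=
  !![0, -x 2, x 1; x 2, 0, -x 0; -x 1, x 0, 0]

/-!
Since `K` is diagonal and `û` has zero diagonal, the `sin θ` term contributes nothing to the trace,
and `û² = u uᵀ - ‖u‖² I₃` turns the trace into `(1 - cos θ) ∑ kᵢ (1 - uᵢ²)`, a convex combination
of the pairwise sums `kᵢ + kⱼ` with weights `u₀², u₁², u₂²`, hence at least `h1 (1 - cos θ)`.
-/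

theorem hat_mul_hat (u : Fin 3 → ℝ) :
    hat u * hat u = vecMulVec u u - (∑ i, u i ^ 2) • 1 := by
  ext i j
  fin_cases i <;> fin_cases j <;>
    simp [hat, mul_apply, vecMulVec_apply, one_apply, Fin.sum_univ_three] <;> ring

theorem trace_diagonal_mul {ι R : Type*} [Fintype ι] [DecidableEq ι] [NonUnitalNonAssocSemiring R]
    (d : ι → R) (A : Matrix ι ι R) :
    (diagonal d * A).trace = ∑ i, d i * A i i := by
  simp [trace, diagonal_mul]

theorem trace_diagonal_mul_hat (d u : Fin 3 → ℝ) : (diagonal d * hat u).trace = 0 := by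
  simp [trace_diagonal_mul, hat, Fin.sum_univ_three]

theorem trace_diagonal_mul_hat_mul_hat (d u : Fin 3 → ℝ) :
    (diagonal d * (hat u * hat u)).trace = -∑ i, d i * (∑ j, u j ^ 2 - u i ^ 2) := by
  simp only [trace_diagonal_mul, hat_mul_hat, Matrix.sub_apply, vecMulVec_apply,
    Matrix.smul_apply, one_apply_eq, ← Finset.sum_neg_distrib]
  congr 1 with i
  ring

theorem trace_diagonal_mul_one_sub_rodrigues (d u : Fin 3 → ℝ) (s c : ℝ) :
    (diagonal d * (1 - (1 + s • hat u + (1 - c) • (hat u * hat u)))).trace =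
      (1 - c) * ∑ i, d i * (∑ j, u j ^ 2 - u i ^ 2) := by
  rw [show (1 : Matrix (Fin 3) (Fin 3) ℝ) - (1 + s • hat u + (1 - c) • (hat u * hat u)) =
      -(s • hat u) - (1 - c) • (hat u * hat u) by abel, mul_sub, mul_neg, mul_smul_comm,
    mul_smul_comm, trace_sub, trace_neg, trace_smul, trace_smul, trace_diagonal_mul_hat,
    trace_diagonal_mul_hat_mul_hat]
  simp

theorem sum_sq_inv_euclNorm_smul {x : Fin 3 → ℝ} (hx : x ≠ 0) :
    ∑ i, ((euclNorm x)⁻¹ • x) i ^ 2 = 1 := by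
  have hpos : 0 < ∑ i, x i ^ 2 := by
    obtain ⟨i, hi⟩ := Function.ne_iff.mp hx
    exact (pow_two_pos_of_ne_zero hi).trans_le
      (Finset.single_le_sum (fun j _ => sq_nonneg (x j)) (Finset.mem_univ i))
  simp only [Pi.smul_apply, smul_eq_mul, mul_pow, ← Finset.mul_sum, euclNorm, inv_pow,
    Real.sq_sqrt hpos.le]
  exact inv_mul_cancel₀ hpos.ne'

theorem min_pair_sum_le_of_sum_sq_eq_one (k u : Fin 3 → ℝ) (hu : ∑ i, u i ^ 2 = 1) :
    min (k 0 + k 1) (min (k 0 + k 2) (k 1 + k 2)) ≤ ∑ i, k i * (∑ j, u j ^ 2 - u i ^ 2) := by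
  set m := min (k 0 + k 1) (min (k 0 + k 2) (k 1 + k 2))
  have h01 : m ≤ k 0 + k 1 := min_le_left _ _
  have h02 : m ≤ k 0 + k 2 := (min_le_right _ _).trans (min_le_left _ _)
  have h12 : m ≤ k 1 + k 2 := (min_le_right _ _).trans (min_le_right _ _)
  simp only [Fin.sum_univ_three] at hu ⊢
  calc m = m * (u 0 ^ 2 + u 1 ^ 2 + u 2 ^ 2) := by rw [hu, mul_one]
    _ ≤ _ := by
      nlinarith [mul_le_mul_of_nonneg_right h12 (sq_nonneg (u 0)),
        mul_le_mul_of_nonneg_right h02 (sq_nonneg (u 1)),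
        mul_le_mul_of_nonneg_right h01 (sq_nonneg (u 2))]

theorem stmt8_general (k1 k2 k3 : ℝ)
    (K : Matrix (Fin 3) (Fin 3) ℝ) (hK : K = Matrix.diagonal ![k1, k2, k3])
    (h1 : ℝ) (hh1 : h1 = min (k1 + k2) (min (k1 + k3) (k2 + k3)))
    (x : Fin 3 → ℝ) (hx : x ≠ 0)
    (θ : ℝ) (hθ : θ = euclNorm x)
    (u : Fin 3 → ℝ) (hu : u = θ⁻¹ • x)
    (G : Matrix (Fin 3) (Fin 3) ℝ)
    (hG : G = 1 + Real.sin θ • hat u + (1 - Real.cos θ) • (hat u * hat u)) :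
    (1 / 2) * (K * (1 - G)).trace ≥ (h1 / 2) * (1 - Real.cos θ) := by
  have hunit : ∑ i, u i ^ 2 = 1 := by rw [hu, hθ]; exact sum_sq_inv_euclNorm_smul hx
  have hbound : h1 ≤ ∑ i, ![k1, k2, k3] i * (∑ j, u j ^ 2 - u i ^ 2) := by
    rw [hh1]; exact min_pair_sum_le_of_sum_sq_eq_one ![k1, k2, k3] u hunit
  rw [hK, hG, trace_diagonal_mul_one_sub_rodrigues]
  linarith [mul_le_mul_of_nonneg_left hbound (sub_nonneg.mpr (Real.cos_le_one θ))]

theorem stmt8 (k1 k2 k3 : ℝ)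
    (hk1 : 0 < k1) (hk2 : 0 < k2) (hk3 : 0 < k3)
    (K : Matrix (Fin 3) (Fin 3) ℝ) (hK : K = Matrix.diagonal ![k1, k2, k3])
    (h1 : ℝ) (hh1 : h1 = min (k1 + k2) (min (k1 + k3) (k2 + k3)))
    (x : Fin 3 → ℝ) (hx : x ≠ 0)
    (θ : ℝ) (hθ : θ = euclNorm x)
    (u : Fin 3 → ℝ) (hu : u = θ⁻¹ • x)
    (G : Matrix (Fin 3) (Fin 3) ℝ)
    (hG : G = 1 + Real.sin θ • hat u + (1 - Real.cos θ) • (hat u * hat u)) :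
    (1 / 2) * (K * (1 - G)).trace ≥ (h1 / 2) * (1 - Real.cos θ) :=
  stmt8_general k1 k2 k3 K hK h1 hh1 x hx θ hθ u hu G hG
end
end

section
/- Let J = diag(J₁,J₂,J₃), K_ω = diag(k_{ω1},k_{ω2},k_{ω3}), and K_R = diag(k_{R1},k_{R2},k_{R3}) be diagonal 3×3 matrices with positive entries, and let c2 satisfy 0 < c2 < min{ min_i √2·k_{ωi}/tr(K_R), min_i (4·J_i·k_{ωi})/(2√2·J_i·tr(K_R) + k_{ωi}²) }. Then the 6×6 block matrix W2 = [[c2·J⁻¹, (c2/2)·K_ω·J⁻¹],[(c2/2)·K_ω·J⁻¹, K_ω − (c2/√2)·tr(K_R)·I₃]] is symmetric positive definite. -/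
/-!
Each of the four blocks of `W2` is diagonal, so `W2` is congruent, via the unitriangular matrix
`[[1, diag (b / a)], [0, 1]]`, to the diagonal matrix with entries `aᵢ` and the Schur complements
`dᵢ - bᵢ² / aᵢ`. Positive definiteness thus reduces, axis by axis, to `bᵢ² < aᵢ dᵢ` for the
`2 × 2` block `[[c2 / Jᵢ, c2 kᵢ / (2 Jᵢ)], [c2 kᵢ / (2 Jᵢ), kᵢ - c2 tr(K_R) / √2]]`, and after
clearing denominators this is exactly `c2 (2√2 Jᵢ tr(K_R) + kᵢ²) < 4 Jᵢ kᵢ`.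
-/

open Matrix

noncomputable section

theorem Matrix.inv_diagonal_of_ne_zero {n K : Type*} [Fintype n] [DecidableEq n] [Field K]
    {v : n → K} (hv : ∀ i, v i ≠ 0) : (diagonal v)⁻¹ = diagonal v⁻¹ :=
  inv_eq_left_inv <| by
    rw [diagonal_mul_diagonal, ← diagonal_one]
    exact congrArg diagonal (funext fun i => inv_mul_cancel₀ (hv i))

theorem Matrix.posDef_fromBlocks_diagonal {n : Type*} [Fintype n] [DecidableEq n]
    {a b d : n → ℝ} (ha : ∀ i, 0 < a i) (hbd : ∀ i, b i ^ 2 < a i * d i) :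
    (fromBlocks (diagonal a) (diagonal b) (diagonal b) (diagonal d)).PosDef := by
  set L : Matrix (n ⊕ n) (n ⊕ n) ℝ := fromBlocks 1 (diagonal (b / a)) 0 1
  have hL : IsUnit L := by simp [L, isUnit_iff_isUnit_det]
  have hcongr : fromBlocks (diagonal a) (diagonal b) (diagonal b) (diagonal d) =
      star L * diagonal (a ⊕ᵥ (d - b ^ 2 / a)) * L := by
    rw [← fromBlocks_diagonal]
    simp only [L, star_eq_conjTranspose, fromBlocks_conjTranspose, fromBlocks_multiply]
    simp only [conjTranspose_eq_transpose_of_trivial, transpose_one, transpose_zero,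
      diagonal_transpose, one_mul, mul_one, zero_mul, mul_zero, add_zero, zero_add,
      diagonal_mul_diagonal, diagonal_add, Pi.div_apply, Pi.sub_apply, Pi.pow_apply, fromBlocks_inj,
      diagonal_eq_diagonal_iff, true_and]
    have ha₀ i : a i ≠ 0 := (ha i).ne'
    exact ⟨fun i => by field_simp [ha₀ i], fun i => by field_simp [ha₀ i],
      fun i => by field_simp [ha₀ i]; ring⟩
  rw [hcongr, hL.posDef_star_left_conjugate_iff, posDef_diagonal_iff]
  rintro (i | i)
  · exact ha i
  · simpa [sub_pos, div_lt_iff₀ (ha i), mul_comm] using hbd i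

theorem sq_offDiag_lt_mul_diag {J k T c : ℝ} (hJ : 0 < J) (hk : 0 < k) (hc : 0 < c)
    (hcT : c < 4 * J * k / (2 * √2 * J * T + k ^ 2)) :
    (c / 2 * k / J) ^ 2 < c / J * (k - c / √2 * T) := by
  have hden : 0 < 2 * √2 * J * T + k ^ 2 :=
    (div_pos_iff_of_pos_left (by positivity)).mp (hc.trans hcT)
  have hcT' : c * (2 * √2 * J * T + k ^ 2) < 4 * J * k := (lt_div_iff₀ hden).mp hcT
  have hs : √2 * √2 = 2 := Real.mul_self_sqrt zero_le_two
  have hpos := mul_pos (by positivity : 0 < c / (4 * J ^ 2)) (sub_pos.mpr hcT')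
  refine sub_pos.mp (hpos.trans_eq ?_)
  field_simp
  linear_combination (-8 * J * c * T) * hs

theorem stmt14_general (Jd kω : Fin 3 → ℝ)
    (hJd : ∀ i, 0 < Jd i) (hkω : ∀ i, 0 < kω i)
    (J Kω KR : Matrix (Fin 3) (Fin 3) ℝ)
    (hJ : J = Matrix.diagonal Jd) (hKω : Kω = Matrix.diagonal kω)
    (c2 : ℝ) (hc2pos : 0 < c2)
    (hc2lt : c2 < min (⨅ i, Real.sqrt 2 * kω i / KR.trace)
      (⨅ i, (4 * Jd i * kω i) / (2 * Real.sqrt 2 * Jd i * KR.trace + (kω i) ^ 2)))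
    (W2 : Matrix (Fin 3 ⊕ Fin 3) (Fin 3 ⊕ Fin 3) ℝ)
    (hW2 : W2 = Matrix.fromBlocks (c2 • J⁻¹) ((c2 / 2 : ℝ) • (Kω * J⁻¹))
      ((c2 / 2 : ℝ) • (Kω * J⁻¹))
      (Kω - ((c2 / Real.sqrt 2) * KR.trace) • (1 : Matrix (Fin 3) (Fin 3) ℝ))) :
    W2.IsSymm ∧ W2.PosDef := by
  have hbound i : c2 < 4 * Jd i * kω i / (2 * √2 * Jd i * KR.trace + kω i ^ 2) :=
    (lt_min_iff.mp hc2lt).2.trans_le (ciInf_le (Finite.bddBelow_range _) i)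
  have hdiag : W2 = fromBlocks (diagonal fun i => c2 / Jd i)
      (diagonal fun i => c2 / 2 * kω i / Jd i) (diagonal fun i => c2 / 2 * kω i / Jd i)
      (diagonal fun i => kω i - c2 / √2 * KR.trace) := by
    rw [hW2, hJ, hKω, inv_diagonal_of_ne_zero fun i => (hJd i).ne']
    simp [diagonal_mul_diagonal, smul_one_eq_diagonal, diagonal_sub, ← diagonal_smul,
      div_eq_mul_inv, mul_assoc]
  have hpd : W2.PosDef := hdiag ▸ posDef_fromBlocks_diagonal (fun i => div_pos hc2pos (hJd i))
    fun i => sq_offDiag_lt_mul_diag (hJd i) (hkω i) hc2pos (hbound i)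
  exact ⟨isHermitian_iff_isSymm.mp hpd.isHermitian, hpd⟩

theorem stmt14 (Jd kω kR : Fin 3 → ℝ)
    (hJd : ∀ i, 0 < Jd i) (hkω : ∀ i, 0 < kω i) (hkR : ∀ i, 0 < kR i)
    (J Kω KR : Matrix (Fin 3) (Fin 3) ℝ)
    (hJ : J = Matrix.diagonal Jd) (hKω : Kω = Matrix.diagonal kω)
    (hKR : KR = Matrix.diagonal kR)
    (c2 : ℝ) (hc2pos : 0 < c2)
    (hc2lt : c2 < min (⨅ i, Real.sqrt 2 * kω i / KR.trace)
      (⨅ i, (4 * Jd i * kω i) / (2 * Real.sqrt 2 * Jd i * KR.trace + (kω i) ^ 2)))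
    (W2 : Matrix (Fin 3 ⊕ Fin 3) (Fin 3 ⊕ Fin 3) ℝ)
    (hW2 : W2 = Matrix.fromBlocks (c2 • J⁻¹) ((c2 / 2 : ℝ) • (Kω * J⁻¹))
      ((c2 / 2 : ℝ) • (Kω * J⁻¹))
      (Kω - ((c2 / Real.sqrt 2) * KR.trace) • (1 : Matrix (Fin 3) (Fin 3) ℝ))) :
    W2.IsSymm ∧ W2.PosDef :=
  stmt14_general Jd kω hJd hkω J Kω KR hJ hKω c2 hc2pos hc2lt W2 hW2
end
end
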